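/- Theorem 3.4, formula (3.15): For all 0 ≤ r < q, the ratio of consecutive determinants satisfies D_{r,q} / D_{r+1,q} = s_r · ∏_{j=1}^{q-r} d_{r,r+j}² = 1 / |φ♯_{q-r}(0,r)|². -/

import Mathlib

open Polynomial Filter Finset

/-- The complementary quantity `d_{k,j} = (1 - |γ_{k,j}|²)^{1/2}`. -/
noncomputable def dd (γ : ℕ → ℕ → ℂ) (k j : ℕ) : ℝ :=
  Real.sqrt (1 - ‖γ k j‖ ^ 2)

/-- The pair `(φ_n(·,l), φ♯_n(·,l))` of Szegő-type orthogonal polynomials attached to the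
Schur parameters `γ` and the diagonal `s`, defined by the recurrences
`φ_n(X,l) = d_{l,n+l}⁻¹ (X φ_{n-1}(X,l+1) - γ_{l,n+l} φ♯_{n-1}(X,l))` and
`φ♯_n(X,l) = d_{l,n+l}⁻¹ (-conj(γ_{l,n+l}) X φ_{n-1}(X,l+1) + φ♯_{n-1}(X,l))`,
with `φ_0(X,l) = φ♯_0(X,l) = s_l^{-1/2}`. -/
noncomputable def phiPair (s : ℕ → ℝ) (γ : ℕ → ℕ → ℂ) : ℕ → ℕ → Polynomial ℂ × Polynomial ℂ
  | 0, l => (Polynomial.C (((Real.sqrt (s l))⁻¹ : ℝ) : ℂ),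
             Polynomial.C (((Real.sqrt (s l))⁻¹ : ℝ) : ℂ))
  | n + 1, l =>
      (Polynomial.C (((dd γ l (n + 1 + l))⁻¹ : ℝ) : ℂ) *
         (Polynomial.X * (phiPair s γ n (l + 1)).1 -
           Polynomial.C (γ l (n + 1 + l)) * (phiPair s γ n l).2),
       Polynomial.C (((dd γ l (n + 1 + l))⁻¹ : ℝ) : ℂ) *
         (-(Polynomial.C ((starRingEnd ℂ) (γ l (n + 1 + l))) * Polynomial.X *
             (phiPair s γ n (l + 1)).1) +
           (phiPair s γ n l).2))

/-- The orthogonal polynomial `φ_n(X,l)`. -/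
noncomputable def phi (s : ℕ → ℝ) (γ : ℕ → ℕ → ℂ) (n l : ℕ) : Polynomial ℂ :=
  (phiPair s γ n l).1

/-- The reversed polynomial `φ♯_n(X,l)`. -/
noncomputable def phiSharp (s : ℕ → ℝ) (γ : ℕ → ℕ → ℂ) (n l : ℕ) : Polynomial ℂ :=
  (phiPair s γ n l).2

/-- The determinant `D_{r,q} = (∏_{k=r}^q s_k) ∏_{r ≤ k < j ≤ q} d_{k,j}²` of the positive
definite kernel associated with the parameters `γ`. -/
noncomputable def Ddet (s : ℕ → ℝ) (γ : ℕ → ℕ → ℂ) (r q : ℕ) : ℝ :=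
  (∏ k ∈ Finset.Icc r q, s k) *
    ∏ k ∈ Finset.Icc r q, ∏ j ∈ Finset.Icc (k + 1) q, (dd γ k j) ^ 2

/-! Deleting the index `r` from `D_{r,q}` removes exactly the factors `s_r` and `d_{r,j}²`.
At `X = 0` the recurrence for `φ♯` loses its `X φ_{n-1}` term, so
`φ♯_n(0,l) = s_l^{-1/2} ∏_{j=1}^{n} d_{l,l+j}⁻¹`. -/

lemma dd_pos {γ : ℕ → ℕ → ℂ} {k j : ℕ} (h : ‖γ k j‖ < 1) : 0 < dd γ k j :=
  Real.sqrt_pos.mpr <| sub_pos.mpr <| pow_lt_one₀ (norm_nonneg _) h two_ne_zero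

lemma Ddet_pos {s : ℕ → ℝ} {γ : ℕ → ℕ → ℂ} (hs : ∀ l, 0 < s l)
    (hγ : ∀ k j, k < j → ‖γ k j‖ < 1) (r q : ℕ) : 0 < Ddet s γ r q := by
  refine mul_pos (prod_pos fun k _ => hs k) (prod_pos fun k _ => prod_pos fun j hj => ?_)
  have hkj : k < j := Nat.lt_of_succ_le (mem_Icc.mp hj).1
  exact pow_pos (dd_pos (hγ k j hkj)) 2

lemma Ddet_eq_mul_Ddet_succ (s : ℕ → ℝ) (γ : ℕ → ℕ → ℂ) {r q : ℕ} (hrq : r < q) :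
    Ddet s γ r q = s r * (∏ j ∈ Icc 1 (q - r), dd γ r (r + j) ^ 2) * Ddet s γ (r + 1) q := by
  have hreindex : ∏ j ∈ Icc 1 (q - r), dd γ r (r + j) ^ 2 = ∏ j ∈ Icc (r + 1) q, dd γ r j ^ 2 := by
    have h := prod_map (Icc 1 (q - r)) (addLeftEmbedding r) (fun j => dd γ r j ^ 2)
    rwa [map_add_left_Icc, Nat.add_sub_cancel' hrq.le, eq_comm] at h
  rw [hreindex, Ddet, Ddet, ← insert_Icc_add_one_left_eq_Icc hrq.le,
    prod_insert (by simp), prod_insert (by simp)]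
  ring

lemma phiSharp_succ_eval_zero (s : ℕ → ℝ) (γ : ℕ → ℕ → ℂ) (n l : ℕ) :
    (phiSharp s γ (n + 1) l).eval 0 =
      (((dd γ l (n + 1 + l))⁻¹ : ℝ) : ℂ) * (phiSharp s γ n l).eval 0 := by
  simp [phiSharp, phiPair]

lemma phiSharp_eval_zero (s : ℕ → ℝ) (γ : ℕ → ℕ → ℂ) (n l : ℕ) :
    (phiSharp s γ n l).eval 0 = (((√(s l) * ∏ j ∈ Icc 1 n, dd γ l (l + j))⁻¹ : ℝ) : ℂ) := by
  induction n with
  | zero => simp [phiSharp, phiPair]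
  | succ n ih =>
    rw [phiSharp_succ_eval_zero, ih, prod_Icc_succ_top (Nat.le_add_left 1 n), add_comm l]
    push_cast
    ring

lemma norm_phiSharp_eval_zero_sq {s : ℕ → ℝ} (γ : ℕ → ℕ → ℂ) (n : ℕ) {l : ℕ} (hs : 0 ≤ s l) :
    ‖(phiSharp s γ n l).eval 0‖ ^ 2 = (s l * ∏ j ∈ Icc 1 n, dd γ l (l + j) ^ 2)⁻¹ := by
  rw [phiSharp_eval_zero, Complex.norm_real, Real.norm_eq_abs, sq_abs, inv_pow, mul_pow,
    Real.sq_sqrt hs, prod_pow]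

/-- Theorem 3.4, formula (3.15): for all `0 ≤ r < q`,
`D_{r,q} / D_{r+1,q} = s_r ∏_{j=1}^{q-r} d_{r,r+j}² = 1 / |φ♯_{q-r}(0,r)|²`. -/
theorem det_ratio_formula (s : ℕ → ℝ) (γ : ℕ → ℕ → ℂ)
    (hs : ∀ l, 0 < s l) (hγ : ∀ k j, k < j → ‖γ k j‖ < 1) (r q : ℕ) (hrq : r < q) :
    Ddet s γ r q / Ddet s γ (r + 1) q =
        s r * ∏ j ∈ Finset.Icc 1 (q - r), (dd γ r (r + j)) ^ 2 ∧
      Ddet s γ r q / Ddet s γ (r + 1) q =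
        1 / ‖(phiSharp s γ (q - r) r).eval 0‖ ^ 2 := by
  have hratio : Ddet s γ r q / Ddet s γ (r + 1) q =
      s r * ∏ j ∈ Icc 1 (q - r), dd γ r (r + j) ^ 2 := by
    rw [Ddet_eq_mul_Ddet_succ s γ hrq, mul_div_cancel_right₀ _ (Ddet_pos hs hγ (r + 1) q).ne']
  refine ⟨hratio, ?_⟩
  rw [hratio, norm_phiSharp_eval_zero_sq γ (q - r) (hs r).le, one_div, inv_inv]
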